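/- On U = {(x,y) ∈ ℝ² : x > 0}, the metric g₂ given by the matrix G₂(x,y) = diag(sinh⁴x, cosh²x) (i.e., g₂ = (sinh⁴x)dx² + (cosh²x)dy²) has Gauss curvature K = 1/sinh⁴x > 0, and the function k := √K = 1/sinh²x satisfies the tensor equation (∇²k)_{ij} = (5/(2k)) ∂_i k ∂_j k − 2k³ (g₂)_{ij} on U. -/

import Mathlib

noncomputable section
open Matrix Real

/-- Points of the parameter domain `U ⊆ ℝ²`. -/
abbrev Pt : Type := Fin 2 → ℝ
/-- Vectors in `ℝ³`. -/
abbrev Vec3 : Type := Fin 3 → ℝ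

/-- Partial derivative `∂ᵢ` of a scalar function on `ℝ²`. -/
def pd (i : Fin 2) (f : Pt → ℝ) : Pt → ℝ :=
  fun p => fderiv ℝ f p (Pi.single i 1)

/-- Partial derivative `∂ᵢ` of an `ℝ³`-valued function on `ℝ²`. -/
def pdV (i : Fin 2) (f : Pt → Vec3) : Pt → Vec3 :=
  fun p => fderiv ℝ f p (Pi.single i 1)

/-- The induced metric (first fundamental form) `gᵢⱼ = ∂ᵢφ ⬝ ∂ⱼφ` of a map `φ : ℝ² → ℝ³`. -/
def indMetric (φ : Pt → Vec3) : Pt → Matrix (Fin 2) (Fin 2) ℝ :=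
  fun p => Matrix.of fun i j => pdV i φ p ⬝ᵥ pdV j φ p

/-- The unit normal `n = (∂₁φ × ∂₂φ)/‖∂₁φ × ∂₂φ‖`. -/
def unitNormal (φ : Pt → Vec3) : Pt → Vec3 :=
  fun p => (Real.sqrt ((crossProduct (pdV 0 φ p) (pdV 1 φ p)) ⬝ᵥ
      (crossProduct (pdV 0 φ p) (pdV 1 φ p))))⁻¹ •
    crossProduct (pdV 0 φ p) (pdV 1 φ p)

/-- The second fundamental form `hᵢⱼ = n ⬝ ∂ᵢ∂ⱼφ`. -/
def sff (φ : Pt → Vec3) : Pt → Matrix (Fin 2) (Fin 2) ℝ :=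
  fun p => Matrix.of fun i j => unitNormal φ p ⬝ᵥ pdV i (pdV j φ) p

/-- Christoffel symbols `Γ^k_{ij}` of a metric `g`. -/
def christoffel (g : Pt → Matrix (Fin 2) (Fin 2) ℝ) (k i j : Fin 2) : Pt → ℝ :=
  fun p => (1/2) * ∑ l, (g p)⁻¹ k l *
    (pd i (fun q => g q j l) p + pd j (fun q => g q i l) p - pd l (fun q => g q i j) p)

/-- Covariant derivative `∇ᵢ h_{jk}` of a symmetric 2-tensor `h` with respect to `g`. -/
def covD (g h : Pt → Matrix (Fin 2) (Fin 2) ℝ) (i j k : Fin 2) : Pt → ℝ :=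
  fun p => pd i (fun q => h q j k) p
    - ∑ l, christoffel g l i j p * h p l k
    - ∑ l, christoffel g l i k p * h p j l

/-- Covariant Hessian `(∇²u)ᵢⱼ = ∂ᵢ∂ⱼu − Σₖ Γ^k_{ij} ∂ₖu`. -/
def hess (g : Pt → Matrix (Fin 2) (Fin 2) ℝ) (u : Pt → ℝ) (i j : Fin 2) : Pt → ℝ :=
  fun p => pd i (pd j u) p - ∑ k, christoffel g k i j p * pd k u p

/-- The curvature component `R₁₂₁₂` of a metric `g` (indices `1,2` rendered as `0,1`). -/
def R1212 (g : Pt → Matrix (Fin 2) (Fin 2) ℝ) : Pt → ℝ :=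
  fun p => ∑ m, g p 0 m *
    (pd 0 (christoffel g m 1 1) p - pd 1 (christoffel g m 1 0) p +
      ∑ l, (christoffel g m 0 l p * christoffel g l 1 1 p -
            christoffel g m 1 l p * christoffel g l 1 0 p))

/-- The Gauss curvature `K = R₁₂₁₂ / det g` of a metric `g`. -/
def gaussK (g : Pt → Matrix (Fin 2) (Fin 2) ℝ) : Pt → ℝ :=
  fun p => R1212 g p / (g p).det

/-- The squared norm `|du|²_g = Σᵢⱼ g^{ij} ∂ᵢu ∂ⱼu`. -/
def gradSq (g : Pt → Matrix (Fin 2) (Fin 2) ℝ) (u : Pt → ℝ) : Pt → ℝ :=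
  fun p => ∑ i, ∑ j, (g p)⁻¹ i j * pd i u p * pd j u p

/-- `g` is a smooth Riemannian metric on `U`: smooth entries, symmetric and
positive definite at each point of `U`. -/
def IsMetricOn (g : Pt → Matrix (Fin 2) (Fin 2) ℝ) (U : Set Pt) : Prop :=
  (∀ i j, ContDiffOn ℝ (⊤ : ℕ∞) (fun p => g p i j) U) ∧
  (∀ p ∈ U, (g p).IsSymm ∧ (g p).PosDef)

/-- `φ` is a smooth immersion on `U`. -/
def IsImmersionOn (φ : Pt → Vec3) (U : Set Pt) : Prop :=
  ContDiffOn ℝ (⊤ : ℕ∞) φ U ∧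
  ∀ p ∈ U, LinearIndependent ℝ ![pdV 0 φ p, pdV 1 φ p]

/-- The model metric `g₂ = sinh⁴x dx² + cosh²x dy²` on the half-plane `x > 0`. -/
def modelG : Pt → Matrix (Fin 2) (Fin 2) ℝ :=
  fun q => !![Real.sinh (q 0) ^ 4, 0; 0, Real.cosh (q 0) ^ 2]

/-- The candidate square root of the (absolute) Gauss curvature. -/
def modelk : Pt → ℝ :=
  fun q => 1 / Real.sinh (q 0) ^ 2

/-! For a metric `diag(E(x), G(x))` that depends on `x` only, the only nonzero Christoffel symbols
are `Γ⁰₀₀ = E'/2E`, `Γ⁰₁₁ = -G'/2E` and `Γ¹₀₁ = Γ¹₁₀ = G'/2G`. Hence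
`R₁₂₁₂ = -G''/2 + E'G'/4E + G'²/4G`, and the Hessian of a function `u(x)` is diagonal with entries
`u'' - E'u'/2E` and `G'u'/2E`. For `E = sinh⁴`, `G = cosh²` and `u = 1/sinh²` every claim becomes an
identity between rational functions of `sinh x` and `cosh x`. -/

open Filter Topology

lemma pd_congr {f f' : Pt → ℝ} {p : Pt} (h : f =ᶠ[𝓝 p] f') (i : Fin 2) :
    pd i f p = pd i f' p := by
  simp only [pd, h.fderiv_eq]

lemma pd_const (i : Fin 2) (c : ℝ) (p : Pt) : pd i (fun _ => c) p = 0 := by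
  simp [pd]

lemma pd_comp_apply {h : ℝ → ℝ} {h' : ℝ} {p : Pt} {j : Fin 2} (hh : HasDerivAt h h' (p j))
    (i : Fin 2) : pd i (fun q => h (q j)) p = if i = j then h' else 0 := by
  have hf : HasFDerivAt (fun q : Pt => h (q j)) (h' • ContinuousLinearMap.proj j) p :=
    hh.comp_hasFDerivAt p (hasFDerivAt_apply (𝕜 := ℝ) j p)
  simp [pd, hf.fderiv, Pi.single_apply, eq_comm]

lemma eventually_nhds_apply {P : ℝ → Prop} {p : Pt} (j : Fin 2) (h : ∀ᶠ y in 𝓝 (p j), P y) :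
    ∀ᶠ q in 𝓝 p, P (q j) :=
  (continuous_apply j).continuousAt.eventually h

lemma pd_pd_comp_apply {U U' : ℝ → ℝ} {U'' : ℝ} {p : Pt}
    (hU : ∀ᶠ y in 𝓝 (p 0), HasDerivAt U (U' y) y) (hU' : HasDerivAt U' U'' (p 0))
    (i j : Fin 2) : pd i (pd j (fun q => U (q 0))) p = if i = 0 ∧ j = 0 then U'' else 0 := by
  have hpd : pd j (fun q => U (q 0)) =ᶠ[𝓝 p] fun q => if j = 0 then U' (q 0) else 0 :=
    (eventually_nhds_apply 0 hU).mono fun q hq => pd_comp_apply hq j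
  rw [pd_congr hpd]
  fin_cases j
  · simpa using pd_comp_apply hU' i
  · simpa using pd_const i 0 p

def diagMetric (E G : ℝ → ℝ) : Pt → Matrix (Fin 2) (Fin 2) ℝ :=
  fun q => !![E (q 0), 0; 0, G (q 0)]

/-- `Γᵏᵢⱼ = diagChristoffel a b a' b' k i j` for the metric `diag(a, b)` whose entries depend on
the first coordinate only, with `x`-derivatives `a'` and `b'`. -/
def diagChristoffel (a b a' b' : ℝ) : Fin 2 → Matrix (Fin 2) (Fin 2) ℝ :=
  ![!![a' / (2 * a), 0; 0, -b' / (2 * a)], !![0, b' / (2 * b); b' / (2 * b), 0]]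

section DiagMetric

variable {E G E' G' : ℝ → ℝ} {p : Pt}

lemma diagMetric_inv (q : Pt) (hE : E (q 0) ≠ 0) (hG : G (q 0) ≠ 0) :
    (diagMetric E G q)⁻¹ = !![(E (q 0))⁻¹, 0; 0, (G (q 0))⁻¹] := by
  rw [Matrix.inv_eq_left_inv]
  ext i j
  fin_cases i <;> fin_cases j <;> simp [diagMetric, hE, hG]

lemma christoffel_diagMetric {e g : ℝ} (hE : HasDerivAt E e (p 0)) (hG : HasDerivAt G g (p 0))
    (hE0 : E (p 0) ≠ 0) (hG0 : G (p 0) ≠ 0) (k i j : Fin 2) :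
    christoffel (diagMetric E G) k i j p = diagChristoffel (E (p 0)) (G (p 0)) e g k i j := by
  have hentry : ∀ a b : Fin 2, (fun q => diagMetric E G q a b) =
      fun q => !![E (q 0), 0; 0, G (q 0)] a b := fun _ _ => rfl
  fin_cases k <;> fin_cases i <;> fin_cases j <;>
    simp [christoffel, diagChristoffel, diagMetric_inv p hE0 hG0, hentry, Fin.sum_univ_two,
      pd_comp_apply hE, pd_comp_apply hG, pd_const] <;> field_simp

lemma christoffel_diagMetric_eventuallyEq (hE : ∀ᶠ y in 𝓝 (p 0), HasDerivAt E (E' y) y)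
    (hG : ∀ᶠ y in 𝓝 (p 0), HasDerivAt G (G' y) y) (hE0 : E (p 0) ≠ 0) (hG0 : G (p 0) ≠ 0)
    (k i j : Fin 2) :
    christoffel (diagMetric E G) k i j =ᶠ[𝓝 p]
      fun q => diagChristoffel (E (q 0)) (G (q 0)) (E' (q 0)) (G' (q 0)) k i j := by
  have hE0' := hE.self_of_nhds.continuousAt.eventually_ne hE0
  have hG0' := hG.self_of_nhds.continuousAt.eventually_ne hG0
  filter_upwards [eventually_nhds_apply 0 (hE.and (hG.and (hE0'.and hG0')))]
    with q ⟨hEq, hGq, hEq0, hGq0⟩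
  exact christoffel_diagMetric hEq hGq hEq0 hGq0 k i j

lemma gaussK_diagMetric {G'' : ℝ} (hE : ∀ᶠ y in 𝓝 (p 0), HasDerivAt E (E' y) y)
    (hG : ∀ᶠ y in 𝓝 (p 0), HasDerivAt G (G' y) y) (hG' : HasDerivAt G' G'' (p 0))
    (hE0 : E (p 0) ≠ 0) (hG0 : G (p 0) ≠ 0) :
    gaussK (diagMetric E G) p =
      (-G'' / 2 + E' (p 0) * G' (p 0) / (4 * E (p 0)) + G' (p 0) ^ 2 / (4 * G (p 0))) /
        (E (p 0) * G (p 0)) := by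
  have hΓ := christoffel_diagMetric hE.self_of_nhds hG.self_of_nhds hE0 hG0
  have hΓ011 : HasDerivAt (fun y => -G' y / (2 * E y))
      ((-G'' * (2 * E (p 0)) - -G' (p 0) * (2 * E' (p 0))) / (2 * E (p 0)) ^ 2) (p 0) :=
    hG'.neg.div (hE.self_of_nhds.const_mul 2) (by simpa using hE0)
  have hpd011 : pd 0 (christoffel (diagMetric E G) 0 1 1) p = _ :=
    (pd_congr (christoffel_diagMetric_eventuallyEq hE hG hE0 hG0 0 1 1) 0).trans
      (by simpa [diagChristoffel] using pd_comp_apply hΓ011 0)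
  have hpd010 : pd 1 (christoffel (diagMetric E G) 0 1 0) p = 0 :=
    (pd_congr (christoffel_diagMetric_eventuallyEq hE hG hE0 hG0 0 1 0) 1).trans
      (by simpa [diagChristoffel] using pd_const 1 0 p)
  simp [gaussK, R1212, Fin.sum_univ_two, hΓ, hpd011, hpd010, diagChristoffel, diagMetric,
    Matrix.det_fin_two_of]
  field_simp
  ring

lemma hess_diagMetric {U U' : ℝ → ℝ} {e g U'' : ℝ} (hE : HasDerivAt E e (p 0))
    (hG : HasDerivAt G g (p 0)) (hE0 : E (p 0) ≠ 0) (hG0 : G (p 0) ≠ 0)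
    (hU : ∀ᶠ y in 𝓝 (p 0), HasDerivAt U (U' y) y) (hU' : HasDerivAt U' U'' (p 0)) (i j : Fin 2) :
    hess (diagMetric E G) (fun q => U (q 0)) i j p =
      !![U'' - e / (2 * E (p 0)) * U' (p 0), 0; 0, g / (2 * E (p 0)) * U' (p 0)] i j := by
  fin_cases i <;> fin_cases j <;>
    simp [hess, christoffel_diagMetric hE hG hE0 hG0, diagChristoffel,
      pd_pd_comp_apply hU hU', pd_comp_apply hU.self_of_nhds, neg_div]

end DiagMetric

lemma modelG_eq_diagMetric : modelG = diagMetric (fun x => sinh x ^ 4) (fun x => cosh x ^ 2) :=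
  rfl

lemma hasDerivAt_sinh_pow_four (x : ℝ) :
    HasDerivAt (fun x => sinh x ^ 4) (4 * sinh x ^ 3 * cosh x) x := by
  simpa using (hasDerivAt_sinh x).fun_pow 4

lemma hasDerivAt_cosh_sq (x : ℝ) :
    HasDerivAt (fun x => cosh x ^ 2) (2 * cosh x * sinh x) x := by
  simpa using (hasDerivAt_cosh x).fun_pow 2

lemma hasDerivAt_two_mul_cosh_mul_sinh (x : ℝ) :
    HasDerivAt (fun x => 2 * cosh x * sinh x) (2 * (sinh x ^ 2 + cosh x ^ 2)) x := by
  refine (((hasDerivAt_cosh x).const_mul 2).fun_mul (hasDerivAt_sinh x)).congr_deriv ?_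
  ring

lemma hasDerivAt_one_div_sinh_sq {x : ℝ} (hx : sinh x ≠ 0) :
    HasDerivAt (fun x => 1 / sinh x ^ 2) (-2 * cosh x / sinh x ^ 3) x := by
  refine ((hasDerivAt_const x (1 : ℝ)).fun_div ((hasDerivAt_sinh x).fun_pow 2)
    (pow_ne_zero 2 hx)).congr_deriv ?_
  field_simp
  ring

lemma hasDerivAt_neg_two_mul_cosh_div_sinh_cube {x : ℝ} (hx : sinh x ≠ 0) :
    HasDerivAt (fun x => -2 * cosh x / sinh x ^ 3)
      ((6 * cosh x ^ 2 - 2 * sinh x ^ 2) / sinh x ^ 4) x := by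
  refine (((hasDerivAt_cosh x).const_mul (-2)).fun_div ((hasDerivAt_sinh x).fun_pow 3)
    (pow_ne_zero 3 hx)).congr_deriv ?_
  field_simp
  ring

lemma gaussK_modelG {p : Pt} (hp : sinh (p 0) ≠ 0) : gaussK modelG p = 1 / sinh (p 0) ^ 4 := by
  rw [modelG_eq_diagMetric, gaussK_diagMetric (E' := fun x => 4 * sinh x ^ 3 * cosh x)
    (G' := fun x => 2 * cosh x * sinh x) (.of_forall hasDerivAt_sinh_pow_four)
    (.of_forall hasDerivAt_cosh_sq) (hasDerivAt_two_mul_cosh_mul_sinh _) (pow_ne_zero 4 hp)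
    (pow_ne_zero 2 (cosh_pos _).ne')]
  field_simp
  ring

lemma hess_modelG_modelk {p : Pt} (hp : sinh (p 0) ≠ 0) (i j : Fin 2) :
    hess modelG modelk i j p =
      5 / (2 * modelk p) * pd i modelk p * pd j modelk p - 2 * modelk p ^ 3 * modelG p i j := by
  have hk : ∀ᶠ y in 𝓝 (p 0), HasDerivAt (fun x => 1 / sinh x ^ 2) (-2 * cosh y / sinh y ^ 3) y :=
    (continuous_sinh.continuousAt.eventually_ne hp).mono fun y hy => hasDerivAt_one_div_sinh_sq hy
  have hmodelk : modelk = fun q => (fun x => 1 / sinh x ^ 2) (q 0) := rfl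
  rw [modelG_eq_diagMetric, hmodelk, hess_diagMetric (hasDerivAt_sinh_pow_four _)
    (hasDerivAt_cosh_sq _) (pow_ne_zero 4 hp) (pow_ne_zero 2 (cosh_pos _).ne') hk
    (hasDerivAt_neg_two_mul_cosh_div_sinh_cube hp), pd_comp_apply hk.self_of_nhds,
    pd_comp_apply hk.self_of_nhds]
  fin_cases i <;> fin_cases j <;> simp [diagMetric] <;> field_simp
  ring

/-- On the half-plane `x > 0`, the metric `g₂ = sinh⁴x dx² + cosh²x dy²` has Gauss curvature
`K = 1/sinh⁴x > 0` and `k = √K = 1/sinh²x` satisfies the Darboux-integrability tensor equation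
`(∇²k)ᵢⱼ = (5/(2k)) ∂ᵢk ∂ⱼk - 2k³ gᵢⱼ`. -/
theorem model_metric_check_14 :
    ∀ p : Pt, 0 < p 0 →
      gaussK modelG p = 1 / Real.sinh (p 0) ^ 4 ∧
      0 < gaussK modelG p ∧
      modelk p = Real.sqrt ( (gaussK modelG p)) ∧
      (∀ i j : Fin 2,
        hess modelG modelk i j p =
          (5 / (2 * modelk p)) * pd i modelk p * pd j modelk p
            - 2 * modelk p ^ 3 * modelG p i j) := by
  intro p hp
  have hs : 0 < sinh (p 0) := sinh_pos_iff.2 hp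
  have hK := gaussK_modelG hs.ne'
  refine ⟨hK, hK ▸ by positivity, ?_, hess_modelG_modelk hs.ne'⟩
  rw [hK, show 1 / sinh (p 0) ^ 4 = (1 / sinh (p 0) ^ 2) ^ 2 by ring, sqrt_sq (by positivity)]
  rfl
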